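/- arXiv:2203.04788 — 2 statements merged into one kernel-verified Lean document; each statement's English description precedes it below -/
import Mathlib

section
/- For every n, there exist Boolean functions f_1, f_2 on n variables (n even) such that some switch-list representations of f_1 and f_2 have size at most 2n, but every switch-list representation of f_1 ∧ f_2 (over any variable order) has size at least n·(2^{n/2+1} − 3). -/
/-!
Take `f₁ = ¬(x₁ ∧ … ∧ x_m)` and `f₂ = ¬(x_{m+1} ∧ … ∧ x_{2m})`. Under an order whose most
significant positions hold the variables of `fᵢ`, the value of `fᵢ` only depends on whether the
encoding `b` reaches a threshold, so `fᵢ` has a single switch.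

For `f₁ ∧ f₂` and an arbitrary order, let `T` and `T'` be the bit positions of the two halves, and
say the least significant bit lies in `T`. The `2^m` numbers `b < 2^n` whose `T`-bits are all set
are zeros of `f₁ ∧ f₂` and are odd. A neighbour `b ± 1` is then even, so it is a zero only if all
its `T'`-bits are set; tracing the carry of the increment shows that this happens for at most one
`b` on each side, plus the boundary case `b + 1 = 2^n`. All other neighbours are switches, and they
are pairwise distinct, which gives `2 · 2^m - 3` switches.
-/

/-- The number encoding an assignment `a` with respect to variable order `π`:
the variable in position `i` of `π` gets bit-weight `2^(n-1-i)`, so earlier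
positions are more significant. -/
def numOf {n : ℕ} (π : Equiv.Perm (Fin n)) (a : Fin n → Bool) : ℕ :=
  ∑ i : Fin n, if a (π i) then 2 ^ (n - 1 - (i : ℕ)) else 0

/-- The assignment encoded by the number `b` with respect to variable order `π`. -/
def asgOf {n : ℕ} (π : Equiv.Perm (Fin n)) (b : ℕ) : Fin n → Bool :=
  fun x => b.testBit (n - 1 - ((π.symm x : Fin n) : ℕ))

/-- The set of switches of a Boolean function `f` on `n` variables with respect
to the variable order `π`: all `b ∈ {1, …, 2^n - 1}` where the value changes. -/
def switches (n : ℕ) (π : Equiv.Perm (Fin n)) (f : (Fin n → Bool) → Bool) : Finset ℕ :=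
  (Finset.Ico 1 (2 ^ n)).filter fun b => f (asgOf π b) ≠ f (asgOf π (b - 1))

open Finset

namespace Nat

theorem testBit_add_one_of_lowest_zero {b k : ℕ} (hk : b.testBit k = false)
    (hlow : ∀ j < k, b.testBit j = true) (j : ℕ) :
    (b + 1).testBit j = if j < k then false else if j = k then true else b.testBit j := by
  have hmod : b % 2 ^ (k + 1) = 2 ^ k - 1 := eq_of_testBit_eq fun i => by
    rw [testBit_mod_two_pow, testBit_two_pow_sub_one]
    rcases lt_trichotomy i k with h | rfl | h
    · simp [h, hlow i h, Nat.lt_succ_of_lt h]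
    · simp [hk]
    · simp [show ¬ i < k + 1 by omega, show ¬ i < k by omega]
  have hb : b = 2 ^ (k + 1) * (b / 2 ^ (k + 1)) + (2 ^ k - 1) := by
    rw [← hmod, Nat.div_add_mod]
  have hlt : 2 ^ k < 2 ^ (k + 1) := Nat.pow_lt_pow_right (by norm_num) (by omega)
  have hb1 : b + 1 = 2 ^ (k + 1) * (b / 2 ^ (k + 1)) + 2 ^ k := by
    have := Nat.one_le_two_pow (n := k)
    omega
  rw [hb1, testBit_two_pow_mul_add _ hlt]
  conv_rhs => rw [hb, testBit_two_pow_mul_add _ (by omega)]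
  rcases lt_trichotomy j k with h | rfl | h
  · simp [h, Nat.lt_succ_of_lt h, testBit_two_pow_of_ne h.ne']
  · simp
  · simp [show ¬ j < k + 1 by omega, show ¬ j < k by omega, h.ne']

theorem eq_of_testBit_eq_of_lt_two_pow {n b b' : ℕ} (hb : b < 2 ^ n) (hb' : b' < 2 ^ n)
    (h : ∀ j < n, b.testBit j = b'.testBit j) : b = b' :=
  eq_of_testBit_eq fun j => by
    by_cases hj : j < n
    · exact h j hj
    · have : 2 ^ n ≤ 2 ^ j := Nat.pow_le_pow_right (by norm_num) (by omega)
      rw [testBit_lt_two_pow (by omega), testBit_lt_two_pow (by omega)]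

theorem forall_testBit_Ico_iff_le_div {n l b : ℕ} (hl : l ≤ n) (hb : b < 2 ^ n) :
    (∀ j ∈ Ico l n, b.testBit j = true) ↔ 2 ^ (n - l) - 1 ≤ b / 2 ^ l := by
  have hq : b / 2 ^ l < 2 ^ (n - l) := by
    rwa [Nat.div_lt_iff_lt_mul (Nat.two_pow_pos l), ← pow_add, Nat.sub_add_cancel hl]
  constructor
  · refine fun h => (eq_of_testBit_eq_of_lt_two_pow
      (Nat.sub_lt (Nat.two_pow_pos _) one_pos) hq fun i hi => ?_).le
    rw [testBit_two_pow_sub_one, testBit_div_two_pow, h (i + l) (by simp; omega)]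
    simp [hi]
  · intro h j hj
    rw [mem_Ico] at hj
    rw [← Nat.sub_add_cancel hj.1, ← testBit_div_two_pow,
      show b / 2 ^ l = 2 ^ (n - l) - 1 by omega, testBit_two_pow_sub_one]
    simp
    omega

end Nat

open Nat

section Carry

variable {n : ℕ} {T T' : Finset ℕ}

/-- The carry of `b + 1` stops at the lowest zero bit `k` of `b`; as `k ∉ T` and the bits of `b + 1`
below `k` are cleared, `k` is the least element of `T'`. -/
theorem exists_isLeast_of_carry (hcover : ∀ j < n, j ∈ T ∨ j ∈ T') {b : ℕ}
    (hb : ∀ j ∈ T, b.testBit j = true) (hb1 : ∀ j ∈ T', (b + 1).testBit j = true)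
    (hlt : b + 1 < 2 ^ n) :
    ∃ k, IsLeast (T' : Set ℕ) k ∧ ∀ j < n, b.testBit j = decide (j ≠ k) := by
  have hex : ∃ k, b.testBit k = false := ⟨b, testBit_lt_two_pow b.lt_two_pow_self⟩
  set k := Nat.find hex
  have hk : b.testBit k = false := Nat.find_spec hex
  have hlow : ∀ j < k, b.testBit j = true := fun j hj => by simpa using Nat.find_min hex hj
  have hcarry := testBit_add_one_of_lowest_zero hk hlow
  have hkn : k < n := by
    by_contra hkn
    have : b + 1 = 0 := eq_of_testBit_eq_of_lt_two_pow hlt (Nat.two_pow_pos n) fun j hj => by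
      simp [hcarry j, show j < k by omega]
    omega
  have hkT' : k ∈ T' := (hcover k hkn).resolve_left fun h => by simp [hb k h] at hk
  refine ⟨k, ⟨hkT', fun j hj => ?_⟩, fun j hj => ?_⟩
  · by_contra h
    simpa [hcarry j, show j < k by omega] using hb1 j hj
  · rcases lt_trichotomy j k with h | rfl | h
    · simp [hlow j h, h.ne]
    · simp [hk]
    · rcases hcover j hj with hT | hT'
      · simp [hb j hT, h.ne']
      · simpa [hcarry j, show ¬ j < k by omega, h.ne'] using hb1 j hT'

theorem eq_of_carry (hcover : ∀ j < n, j ∈ T ∨ j ∈ T') {b b' : ℕ}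
    (hb : ∀ j ∈ T, b.testBit j = true) (hb1 : ∀ j ∈ T', (b + 1).testBit j = true)
    (hlt : b + 1 < 2 ^ n)
    (hb' : ∀ j ∈ T, b'.testBit j = true) (hb1' : ∀ j ∈ T', (b' + 1).testBit j = true)
    (hlt' : b' + 1 < 2 ^ n) : b = b' := by
  obtain ⟨k, hk, hbits⟩ := exists_isLeast_of_carry hcover hb hb1 hlt
  obtain ⟨k', hk', hbits'⟩ := exists_isLeast_of_carry hcover hb' hb1' hlt'
  obtain rfl := hk.unique hk'
  exact eq_of_testBit_eq_of_lt_two_pow (n := n) (by omega) (by omega) fun j hj => by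
    rw [hbits j hj, hbits' j hj]

end Carry

def switchSet (N : ℕ) (s : ℕ → Bool) : Finset ℕ :=
  (Ico 1 N).filter fun b => s b ≠ s (b - 1)

section SwitchSet

variable {N : ℕ} {s : ℕ → Bool}

theorem card_switchSet_le_one_of_antitoneOn (hs : AntitoneOn s (Set.Iio N)) :
    #(switchSet N s) ≤ 1 := by
  have hdown : ∀ b ∈ switchSet N s, s (b - 1) = true ∧ s b = false ∧ 1 ≤ b ∧ b < N := by
    intro b hb
    simp only [switchSet, mem_filter, mem_Ico] at hb
    have := hs (show b - 1 ∈ Set.Iio N by simp; omega) (show b ∈ Set.Iio N from hb.1.2)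
      (by omega)
    revert this hb
    cases s b <;> cases s (b - 1) <;> simp_all
  have hle : ∀ a ∈ switchSet N s, ∀ b ∈ switchSet N s, a ≤ b := by
    intro a ha b hb
    by_contra! hba
    obtain ⟨-, hfalse, -, -⟩ := hdown b hb
    obtain ⟨htrue, -, -, ha⟩ := hdown a ha
    have := hs (show b ∈ Set.Iio N by simp; omega) (show a - 1 ∈ Set.Iio N by simp; omega)
      (by omega)
    rw [htrue, hfalse] at this
    exact absurd this (by decide)
  exact card_le_one.mpr fun a ha b hb => le_antisymm (hle a ha b hb) (hle b hb a ha)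

/-- Each zero `b ∈ A` contributes the switches `b` and `b + 1` unless the corresponding neighbour
is missing or is a zero itself; the former are zeros and the latter are not, so none is counted
twice. -/
theorem two_mul_card_le_card_switchSet {A : Finset ℕ} (hA : ∀ b ∈ A, b < N ∧ s b = false) :
    2 * #A ≤ #(switchSet N s) + #(A.filter fun b => ¬(0 < b ∧ s (b - 1) = true))
      + #(A.filter fun b => ¬(b + 1 < N ∧ s (b + 1) = true)) := by
  have hAL := card_filter_add_card_filter_not (s := A) (p := fun b => 0 < b ∧ s (b - 1) = true)
  have hAR := card_filter_add_card_filter_not (s := A) (p := fun b => b + 1 < N ∧ s (b + 1) = true)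
  set L := A.filter fun b => 0 < b ∧ s (b - 1) = true
  set R := A.filter fun b => b + 1 < N ∧ s (b + 1) = true
  have hL : L ⊆ switchSet N s := by
    intro b hb
    simp only [L, mem_filter] at hb
    simp only [switchSet, mem_filter, mem_Ico]
    exact ⟨⟨hb.2.1, (hA b hb.1).1⟩, by simp [(hA b hb.1).2, hb.2.2]⟩
  have hR : R.image (· + 1) ⊆ switchSet N s := by
    intro c hc
    obtain ⟨b, hb, rfl⟩ := mem_image.mp hc
    simp only [R, mem_filter] at hb
    simp only [switchSet, mem_filter, mem_Ico, Nat.add_sub_cancel]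
    exact ⟨⟨by omega, hb.2.1⟩, by simp [(hA b hb.1).2, hb.2.2]⟩
  have hdisj : Disjoint L (R.image (· + 1)) := by
    refine disjoint_left.mpr fun c hcL hcR => ?_
    obtain ⟨b, hb, rfl⟩ := mem_image.mp hcR
    simp only [L, R, mem_filter] at hcL hb
    simp [(hA _ hcL.1).2] at hb
  have hcard := card_le_card (union_subset hL hR)
  rw [card_union_of_disjoint hdisj, card_image_of_injective _ (add_left_injective 1)] at hcard
  omega

end SwitchSet

def allBitsSet (T : Finset ℕ) (b : ℕ) : Bool :=
  decide (∀ j ∈ T, b.testBit j = true)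

def neitherAllBitsSet (T T' : Finset ℕ) (b : ℕ) : Bool :=
  !allBitsSet T b && !allBitsSet T' b

section LowerBound

variable {n : ℕ} {T T' : Finset ℕ}

theorem neitherAllBitsSet_comm : neitherAllBitsSet T T' = neitherAllBitsSet T' T :=
  funext fun _ => Bool.and_comm _ _

theorem neitherAllBitsSet_eq_false_iff_of_even (h0 : 0 ∈ T) {c : ℕ} (hc : c % 2 = 0) :
    neitherAllBitsSet T T' c = false ↔ ∀ j ∈ T', c.testBit j = true := by
  have hT : ¬ ∀ j ∈ T, c.testBit j = true := fun h => by
    simpa [Nat.testBit_zero, hc] using h 0 h0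
  simp [neitherAllBitsSet, allBitsSet, hT]

theorem two_pow_card_le_card_filter_allBitsSet (hT : T ∪ T' = range n) (hdisj : Disjoint T T') :
    2 ^ #T' ≤ #((range (2 ^ n)).filter (allBitsSet T ·)) := by
  have hT'n : ∀ j ∈ T', j < n := fun j hj => mem_range.mp (hT ▸ mem_union_right T hj)
  let bitsOff (R : Finset ℕ) : ℕ := Nat.ofBits fun i : Fin n => decide ((i : ℕ) ∉ R)
  have hmaps : Set.MapsTo bitsOff T'.powerset ((range (2 ^ n)).filter (allBitsSet T ·)) := by
    intro R hR
    simp only [coe_powerset, Set.mem_preimage, Set.mem_powerset_iff, coe_subset] at hR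
    simp only [coe_filter, mem_range, allBitsSet, decide_eq_true_eq, Set.mem_ofPred_eq]
    refine ⟨Nat.ofBits_lt_two_pow _, fun j hj => ?_⟩
    have hjn : j < n := mem_range.mp (hT ▸ mem_union_left T' hj)
    simpa [bitsOff, Nat.testBit_ofBits_lt _ _ hjn] using
      fun hjR => disjoint_left.mp hdisj hj (hR hjR)
  have hinj : Set.InjOn bitsOff T'.powerset := by
    intro R hR R' hR' h
    simp only [coe_powerset, Set.mem_preimage, Set.mem_powerset_iff, coe_subset] at hR hR'
    ext j
    by_cases hjn : j < n
    · simpa [bitsOff, Nat.testBit_ofBits_lt _ _ hjn] using congrArg (·.testBit j) h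
    · exact iff_of_false (fun hj => hjn (hT'n j (hR hj))) fun hj => hjn (hT'n j (hR' hj))
  simpa using card_le_card_of_injOn bitsOff hmaps hinj

theorem card_filter_not_pred_neitherAllBitsSet_le_one (hT : T ∪ T' = range n) (h0 : 0 ∈ T) :
    #(((range (2 ^ n)).filter (allBitsSet T ·)).filter
      fun b => ¬(0 < b ∧ neitherAllBitsSet T T' (b - 1) = true)) ≤ 1 := by
  have hcover : ∀ j < n, j ∈ T' ∨ j ∈ T := fun j hj => by simpa [or_comm, ← mem_union, hT] using hj
  have hpred : ∀ b ∈ ((range (2 ^ n)).filter (allBitsSet T ·)).filter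
      (fun b => ¬(0 < b ∧ neitherAllBitsSet T T' (b - 1) = true)),
      0 < b ∧ b < 2 ^ n ∧ (∀ j ∈ T, b.testBit j = true) ∧ ∀ j ∈ T', (b - 1).testBit j = true := by
    intro b hb
    simp only [mem_filter, mem_range, allBitsSet, decide_eq_true_eq, not_and,
      Bool.not_eq_true] at hb
    obtain ⟨⟨hlt, hbT⟩, hbad⟩ := hb
    have hodd : b % 2 = 1 := by simpa using hbT 0 h0
    exact ⟨by omega, hlt, hbT,
      (neitherAllBitsSet_eq_false_iff_of_even h0 (by omega)).mp (hbad (by omega))⟩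
  refine card_le_one.mpr fun b hb b' hb' => ?_
  obtain ⟨hpos, hlt, hbT, hbT'⟩ := hpred b hb
  obtain ⟨hpos', hlt', hbT₂, hbT'₂⟩ := hpred b' hb'
  have := eq_of_carry hcover hbT' (by rwa [Nat.sub_add_cancel hpos]) (by omega)
    hbT'₂ (by rwa [Nat.sub_add_cancel hpos']) (by omega)
  omega

theorem card_filter_not_succ_neitherAllBitsSet_le_two (hT : T ∪ T' = range n) (h0 : 0 ∈ T) :
    #(((range (2 ^ n)).filter (allBitsSet T ·)).filter
      fun b => ¬(b + 1 < 2 ^ n ∧ neitherAllBitsSet T T' (b + 1) = true)) ≤ 2 := by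
  have hcover : ∀ j < n, j ∈ T ∨ j ∈ T' := fun j hj => by simpa [← mem_union, hT] using hj
  set C := ((range (2 ^ n)).filter (allBitsSet T ·)).filter
    fun b => b + 1 < 2 ^ n ∧ ∀ j ∈ T', (b + 1).testBit j = true
  have hsub : ((range (2 ^ n)).filter (allBitsSet T ·)).filter
      (fun b => ¬(b + 1 < 2 ^ n ∧ neitherAllBitsSet T T' (b + 1) = true)) ⊆ {2 ^ n - 1} ∪ C := by
    intro b hb
    obtain ⟨hbA, hbad⟩ := mem_filter.mp hb
    obtain ⟨hlt, hbT⟩ := mem_filter.mp hbA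
    simp only [mem_range, allBitsSet, decide_eq_true_eq] at hlt hbT
    by_cases hlt1 : b + 1 < 2 ^ n
    · have hodd : b % 2 = 1 := by simpa using hbT 0 h0
      refine mem_union_right _ (mem_filter.mpr ⟨hbA, hlt1, ?_⟩)
      exact (neitherAllBitsSet_eq_false_iff_of_even h0 (by omega)).mp (by simpa [hlt1] using hbad)
    · exact mem_union_left _ (mem_singleton.mpr (by omega))
  have hC : #C ≤ 1 := card_le_one.mpr fun b hb b' hb' => by
    simp only [C, mem_filter, mem_range, allBitsSet, decide_eq_true_eq] at hb hb'
    exact eq_of_carry hcover hb.1.2 hb.2.2 hb.2.1 hb'.1.2 hb'.2.2 hb'.2.1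
  calc _ ≤ #({2 ^ n - 1} ∪ C) := card_le_card hsub
    _ ≤ #{2 ^ n - 1} + #C := card_union_le _ _
    _ ≤ 2 := by rw [card_singleton]; omega

theorem two_pow_succ_sub_three_le_card_switchSet_of_zero_mem (hT : T ∪ T' = range n)
    (hdisj : Disjoint T T') (h0 : 0 ∈ T) :
    2 ^ (#T' + 1) - 3 ≤ #(switchSet (2 ^ n) (neitherAllBitsSet T T')) := by
  have hcount := two_mul_card_le_card_switchSet (N := 2 ^ n) (s := neitherAllBitsSet T T')
    (A := (range (2 ^ n)).filter (allBitsSet T ·)) fun b hb => by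
      obtain ⟨hlt, hbT⟩ := mem_filter.mp hb
      exact ⟨mem_range.mp hlt, by simp [neitherAllBitsSet, hbT]⟩
  have := card_filter_not_pred_neitherAllBitsSet_le_one (T' := T') hT h0
  have := card_filter_not_succ_neitherAllBitsSet_le_two (T' := T') hT h0
  have := two_pow_card_le_card_filter_allBitsSet hT hdisj
  rw [pow_succ]
  omega

theorem two_pow_min_succ_sub_three_le_card_switchSet (hT : T ∪ T' = range n)
    (hdisj : Disjoint T T') :
    2 ^ (min #T #T' + 1) - 3 ≤ #(switchSet (2 ^ n) (neitherAllBitsSet T T')) := by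
  have hmono {k l : ℕ} (h : k ≤ l) : 2 ^ (k + 1) - 3 ≤ 2 ^ (l + 1) - 3 :=
    Nat.sub_le_sub_right (Nat.pow_le_pow_right (by norm_num) (by omega)) 3
  by_cases h0 : 0 ∈ T
  · exact (hmono (min_le_right _ _)).trans
      (two_pow_succ_sub_three_le_card_switchSet_of_zero_mem hT hdisj h0)
  by_cases h0' : 0 ∈ T'
  · rw [neitherAllBitsSet_comm]
    exact (hmono (min_le_left _ _)).trans
      (two_pow_succ_sub_three_le_card_switchSet_of_zero_mem (by rwa [union_comm]) hdisj.symm h0')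
  have hn : n = 0 := by
    by_contra hn
    have : 0 ∈ T ∪ T' := hT ▸ mem_range.mpr (Nat.pos_of_ne_zero hn)
    simp [h0, h0'] at this
  subst hn
  simp [(union_eq_empty.mp (hT.trans range_zero)).1]

end LowerBound

section Assignments

variable {n : ℕ}

def bitIndex (π : Equiv.Perm (Fin n)) (x : Fin n) : ℕ :=
  (π.symm x).rev

theorem asgOf_apply (π : Equiv.Perm (Fin n)) (b : ℕ) (x : Fin n) :
    asgOf π b x = b.testBit (bitIndex π x) := by
  simp only [asgOf, bitIndex, Fin.val_rev]
  congr 1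
  omega

theorem bitIndex_injective (π : Equiv.Perm (Fin n)) : Function.Injective (bitIndex π) :=
  Fin.val_injective.comp (Fin.rev_injective.comp π.symm.injective)

theorem image_bitIndex_univ (π : Equiv.Perm (Fin n)) : univ.image (bitIndex π) = range n := by
  ext j
  simp only [mem_image, mem_univ, true_and, mem_range, bitIndex]
  exact ⟨fun ⟨x, hx⟩ => hx ▸ (π.symm x).rev.isLt, fun hj => ⟨π (Fin.rev ⟨j, hj⟩), by simp⟩⟩

def notAllTrue (S : Finset (Fin n)) (a : Fin n → Bool) : Bool :=
  !decide (∀ x ∈ S, a x = true)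

theorem notAllTrue_asgOf (S : Finset (Fin n)) (π : Equiv.Perm (Fin n)) (b : ℕ) :
    notAllTrue S (asgOf π b) = !allBitsSet (S.image (bitIndex π)) b := by
  simp [notAllTrue, allBitsSet, asgOf_apply]

theorem switches_eq_switchSet (π : Equiv.Perm (Fin n)) (f : (Fin n → Bool) → Bool) :
    switches n π f = switchSet (2 ^ n) fun b => f (asgOf π b) :=
  rfl

theorem card_switches_notAllTrue_le_one {S : Finset (Fin n)} {π : Equiv.Perm (Fin n)} {l : ℕ}
    (hl : l ≤ n) (hS : ∀ x, x ∈ S ↔ l ≤ bitIndex π x) :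
    #(switches n π (notAllTrue S)) ≤ 1 := by
  have himage : S.image (bitIndex π) = Ico l n := by
    ext j
    rw [mem_Ico, ← mem_range, ← image_bitIndex_univ π]
    simp only [mem_image, mem_univ, true_and, hS]
    exact ⟨fun ⟨x, hx, hxj⟩ => ⟨hxj ▸ hx, x, hxj⟩, fun ⟨hj, x, hxj⟩ => ⟨x, hxj ▸ hj, hxj⟩⟩
  rw [switches_eq_switchSet]
  refine card_switchSet_le_one_of_antitoneOn fun b hb b' hb' hbb' => ?_
  simp only [notAllTrue_asgOf, himage, allBitsSet, Bool.le_iff_imp, Bool.not_eq_true',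
    decide_eq_false_iff_not]
  rw [forall_testBit_Ico_iff_le_div hl hb, forall_testBit_Ico_iff_le_div hl hb']
  exact fun h h' => h (h'.trans (Nat.div_le_div_right hbb'))

theorem two_pow_min_succ_sub_three_le_card_switches (S : Finset (Fin n))
    (π : Equiv.Perm (Fin n)) :
    2 ^ (min #S #Sᶜ + 1) - 3 ≤ #(switches n π fun a => notAllTrue S a && notAllTrue Sᶜ a) := by
  have hinj := bitIndex_injective π
  have h := two_pow_min_succ_sub_three_le_card_switchSet (T := S.image (bitIndex π))
    (T' := Sᶜ.image (bitIndex π)) (by rw [← image_union, union_compl, image_bitIndex_univ])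
    ((disjoint_image hinj).mpr disjoint_compl_right)
  rw [card_image_of_injective _ hinj, card_image_of_injective _ hinj] at h
  convert h using 2
  rw [switches_eq_switchSet]
  congr 1
  ext b
  simp only [notAllTrue_asgOf, neitherAllBitsSet]

end Assignments

/-- For every even `n` there are functions with switch-lists of size at most
`2n` whose conjunction needs switch-lists of size at least `n·(2^(n/2+1)-3)`
under every variable order. -/
theorem conjunction_blowup {n : ℕ} (hn : Even n) :
    ∃ h₁ h₂ : (Fin n → Bool) → Bool,
      (∃ π : Equiv.Perm (Fin n), n * (switches n π h₁).card ≤ 2 * n) ∧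
      (∃ π : Equiv.Perm (Fin n), n * (switches n π h₂).card ≤ 2 * n) ∧
      (∀ π : Equiv.Perm (Fin n),
        n * (2 ^ (n / 2 + 1) - 3) ≤
          n * (switches n π (fun a => h₁ a && h₂ a)).card) := by
  obtain ⟨m, rfl⟩ := hn
  let S : Finset (Fin (m + m)) := univ.filter fun i => (i : ℕ) < m
  have hS : #S = m := by simp [S, Fin.card_filter_val_lt]
  have hSc : #Sᶜ = m := by rw [card_compl, hS, Fintype.card_fin]; omega
  refine ⟨notAllTrue S, notAllTrue Sᶜ, ⟨Equiv.refl _, ?_⟩, ⟨Fin.revPerm, ?_⟩, fun π => ?_⟩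
  · have := card_switches_notAllTrue_le_one (S := S) (π := Equiv.refl _) (l := m) (by omega)
      fun x => by simp [S, bitIndex]; omega
    nlinarith
  · have := card_switches_notAllTrue_le_one (S := Sᶜ) (π := Fin.revPerm) (l := m) (by omega)
      fun x => by simp [S, bitIndex]
    nlinarith
  · have := two_pow_min_succ_sub_three_le_card_switches S π
    rw [hS, hSc, min_self] at this
    rw [show (m + m) / 2 = m by omega]
    exact Nat.mul_le_mul_left _ this
end

section
/- Under the lexicographic identification with respect to a permutation π, the models of f_1 = (⋀_{i=1}^{n/2} x_i) ∨ (⋀_{i=1}^n ¬x_i) other than the all-zero assignment form exactly the interval [Σ_{j=n/2+1}^{n} 2^{j−1}, 2^n − 1] of numbers, provided π places x_1,...,x_{n/2} after x_{n/2+1},...,x_n in significance (i.e., x_1,...,x_{n/2} occupy the high-order positions). -/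
/-- `f₁ = (⋀_{i=1}^{n/2} xᵢ) ∨ (⋀_{i=1}^{n} ¬xᵢ)` (variables indexed `0,…,n-1`). -/
def f1 (n : ℕ) : (Fin n → Bool) → Bool := fun a =>
  (decide (∀ i : Fin n, (i : ℕ) < n / 2 → a i = true)) ||
  (decide (∀ i : Fin n, a i = false))

open Finset

lemma Nat.sum_Ico_two_pow {m n : ℕ} (hmn : m ≤ n) : ∑ j ∈ Ico m n, 2 ^ j = 2 ^ n - 2 ^ m := by
  have hsplit := sum_range_add_sum_Ico (fun j => 2 ^ j) hmn
  simp only [Nat.geomSum_eq le_rfl, Nat.add_one_sub_one, Nat.div_one] at hsplit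
  have := Nat.pow_le_pow_right two_pos hmn
  have := Nat.one_le_two_pow (n := m)
  omega

lemma Nat.forall_testBit_lt_iff_eq_two_pow_sub_one {q k : ℕ} (hq : q < 2 ^ k) :
    (∀ i < k, q.testBit i = true) ↔ q = 2 ^ k - 1 := by
  refine ⟨fun h => Nat.eq_of_testBit_eq fun i => ?_, by rintro rfl i hi; simpa using hi⟩
  rw [Nat.testBit_two_pow_sub_one]
  by_cases hi : i < k
  · simp [h i hi, hi]
  · simp [hi, Nat.testBit_lt_two_pow (hq.trans_le (Nat.pow_le_pow_right two_pos (not_lt.1 hi)))]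

lemma Nat.forall_testBit_Ico_iff {m n b : ℕ} (hmn : m ≤ n) (hb : b < 2 ^ n) :
    (∀ j ∈ Ico m n, b.testBit j = true) ↔ 2 ^ n - 2 ^ m ≤ b := by
  have hpow : 2 ^ m * 2 ^ (n - m) = 2 ^ n := by rw [← pow_add, Nat.add_sub_cancel' hmn]
  have hq : b / 2 ^ m < 2 ^ (n - m) := Nat.div_lt_of_lt_mul (hpow ▸ hb)
  have hshift : (∀ j ∈ Ico m n, b.testBit j = true) ↔
      ∀ i < n - m, (b / 2 ^ m).testBit i = true := by
    simp only [Nat.testBit_div_two_pow, mem_Ico]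
    refine ⟨fun h i hi => h _ ⟨by omega, by omega⟩, fun h j hj => ?_⟩
    simpa [Nat.sub_add_cancel hj.1] using h (j - m) (by omega)
  have hdiv : 2 ^ n - 2 ^ m ≤ b ↔ 2 ^ (n - m) - 1 ≤ b / 2 ^ m := by
    rw [Nat.le_div_iff_mul_le (by positivity), Nat.sub_mul, one_mul, mul_comm, hpow]
  rw [hshift, Nat.forall_testBit_lt_iff_eq_two_pow_sub_one hq, hdiv]
  omega

lemma asgOf_apply_rev {n : ℕ} (π : Equiv.Perm (Fin n)) (b : ℕ) (i : Fin n) :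
    asgOf π b (π i.rev) = b.testBit i := by
  simp only [asgOf, Equiv.symm_apply_apply, Fin.val_rev]
  congr 1
  omega

lemma forall_asgOf_iff {n : ℕ} (π : Equiv.Perm (Fin n)) (b : ℕ) (p : Fin n → Prop) (v : Bool) :
    (∀ x, p x → asgOf π b x = v) ↔ ∀ i : Fin n, p (π i.rev) → b.testBit i = v := by
  rw [(Fin.revPerm.trans π).symm.forall_congr_left]
  simp [asgOf_apply_rev]

lemma asgOf_eq_false_iff {n b : ℕ} (π : Equiv.Perm (Fin n)) (hb : b < 2 ^ n) :
    (∀ x, asgOf π b x = false) ↔ b = 0 := by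
  refine ⟨fun h => Nat.eq_of_testBit_eq fun i => ?_, by rintro rfl x; simp [asgOf]⟩
  have hbits := (forall_asgOf_iff π b (fun _ => True) false).1 fun x _ => h x
  rw [Nat.zero_testBit]
  by_cases hi : i < n
  · exact hbits ⟨i, hi⟩ trivial
  · exact Nat.testBit_lt_two_pow (hb.trans_le (Nat.pow_le_pow_right two_pos (not_lt.1 hi)))

lemma forall_asgOf_of_lt_iff {n k : ℕ} (π : Equiv.Perm (Fin n))
    (hπ : ∀ i : Fin n, ((π i : ℕ) < k ↔ (i : ℕ) < k)) (b : ℕ) :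
    (∀ x : Fin n, (x : ℕ) < k → asgOf π b x = true) ↔ ∀ j ∈ Ico (n - k) n, b.testBit j = true := by
  simp only [forall_asgOf_iff, hπ, Fin.val_rev, mem_Ico]
  exact ⟨fun h j hj => h ⟨j, hj.2⟩ (by simp only; omega), fun h i hi => h i ⟨by omega, i.2⟩⟩

/-- If `π` gives `x₁,…,x_{n/2}` the most significant positions, then the
nonzero models of `f₁` form exactly the interval `[∑_{j=n/2+1}^{n} 2^(j-1), 2^n - 1]`. -/
theorem f1_models_interval {n : ℕ} (hn : Even n) (π : Equiv.Perm (Fin n))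
    (hπ : ∀ i : Fin n, ((π i : ℕ) < n / 2 ↔ (i : ℕ) < n / 2))
    (b : ℕ) (hb : b < 2 ^ n) (hb0 : 0 < b) :
    f1 n (asgOf π b) = true ↔ (∑ j ∈ Finset.Ico (n / 2) n, 2 ^ j) ≤ b := by
  have hhalf : n / 2 ≤ n := Nat.div_le_self n 2
  have hnot_zero : ¬ ∀ x, asgOf π b x = false := by
    rw [asgOf_eq_false_iff π hb]
    exact hb0.ne'
  have hsub : n - n / 2 = n / 2 := by
    obtain ⟨k, rfl⟩ := hn
    omega
  rw [Nat.sum_Ico_two_pow hhalf, ← Nat.forall_testBit_Ico_iff hhalf hb]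
  simp only [f1, Bool.or_eq_true, decide_eq_true_eq, or_iff_left hnot_zero]
  rw [forall_asgOf_of_lt_iff π hπ b, hsub]
end
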